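/- Entropic uncertainty principle for quantum pressures: let H be a complex Hilbert space, (π_k)_{k=1}^N and (τ_j)_{j=1}^M two partitions of identity on H, (V_k)_{k=1}^N and (W_j)_{j=1}^M families of positive real numbers, A := max_k V_k, B := max_j W_j. Let U be a linear isometry of H, (O_k)_{k=1}^N a family of bounded operators on H, δ' ≥ 0, and ψ ∈ H a vector of norm 1 such that ‖(Id − O_k)π_k ψ‖ ≤ δ' for every k. Then p_τ(Uψ) + p_π(ψ) ≥ −2·log( c_O(U) + N·A·B·δ' ), where c_O(U) := max_{j,k} ( V_k · W_j · ‖τ_j U π_k^* O_k‖ ). -/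

import Mathlib

/-!
Put `p j = ‖τ j (U ψ)‖`, `q k = ‖π k ψ‖` and `e (j, k) = ⟪τ j (U ψ), τ j (U (π k)† (π k ψ))⟫`;
the matrix `e` has row sums `p j ^ 2` and column sums `q k ^ 2`. Interpolate, as in the proof of
Riesz–Thorin, with the entire function `G z = ∑ e (j, k) * (W j * p j * V k * q k) ^ z`.
Then `G 0 = 1`; on `re z = 0` the twist is unimodular and `‖G z‖ ≤ 1` because `τ`, `U` and the
adjoint of the column `π` are contractions; on `re z = 1`, splitting
`π k ψ = O k (π k ψ) + (π k ψ - O k (π k ψ))` gives `‖G z‖ ≤ C := c_O(U) + N A B δ'`.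
The three lines theorem gives `‖G t‖ ≤ C ^ t` on `[0, 1]`, so `G' 0 ≤ log C`, and
`G' 0 = ∑ Re e (j, k) * log (W j * p j * V k * q k)` is minus half the sum of the two pressures.
-/

open Complex ContinuousLinearMap Filter Finset Topology
open scoped InnerProductSpace

theorem le_log_of_hasDerivAt_of_le_rpow {f : ℝ → ℝ} {f' C : ℝ} (hf : HasDerivAt f f' 0)
    (hf0 : f 0 = 1) (hC : 0 ≤ C) (hle : ∀ t ∈ Set.Ioc (0 : ℝ) 1, f t ≤ C ^ t) :
    f' ≤ Real.log C := by
  have hnear : ∀ᶠ t in 𝓝[>] (0 : ℝ), f t ≤ C ^ t := by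
    filter_upwards [Ioc_mem_nhdsGT one_pos] with t ht using hle t ht
  have hCpos : 0 < C := by
    refine hC.lt_of_ne' fun hC0 => ?_
    have hlim : Tendsto f (𝓝[>] 0) (𝓝 1) :=
      hf0 ▸ hf.continuousAt.continuousWithinAt.tendsto
    have : (1 : ℝ) ≤ 0 := by
      refine le_of_tendsto hlim ?_
      filter_upwards [hnear, self_mem_nhdsWithin] with t ht ht0
      rwa [hC0, Real.zero_rpow (ne_of_gt ht0)] at ht
    linarith
  have hpow : HasDerivAt (fun t : ℝ => C ^ t) (Real.log C) 0 := by
    simpa using (Real.hasStrictDerivAt_const_rpow hCpos 0).hasDerivAt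
  refine le_of_tendsto_of_tendsto hf.tendsto_slope_zero_right hpow.tendsto_slope_zero_right ?_
  filter_upwards [hnear, self_mem_nhdsWithin] with t ht ht0
  simp only [zero_add, hf0, Real.rpow_zero, smul_eq_mul]
  exact mul_le_mul_of_nonneg_left (by linarith) (inv_nonneg.2 (le_of_lt ht0))

section ExpSum

variable {ι : Type*} [Fintype ι]

noncomputable def expSum (e : ι → ℂ) (d : ι → ℝ) (z : ℂ) : ℂ := ∑ i, e i * cexp (z * d i)

theorem differentiable_expSum (e : ι → ℂ) (d : ι → ℝ) : Differentiable ℂ (expSum e d) := by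
  unfold expSum
  fun_prop

theorem norm_expSum_le_of_re_mem_Icc (e : ι → ℂ) (d : ι → ℝ) {z : ℂ}
    (hz : z.re ∈ Set.Icc (0 : ℝ) 1) : ‖expSum e d z‖ ≤ ∑ i, ‖e i‖ * Real.exp |d i| := by
  refine (norm_sum_le _ _).trans (sum_le_sum fun i _ => ?_)
  rw [norm_mul, Complex.norm_exp, re_mul_ofReal]
  gcongr
  calc z.re * d i ≤ |z.re * d i| := le_abs_self _
    _ = z.re * |d i| := by rw [abs_mul, abs_of_nonneg hz.1]
    _ ≤ |d i| := mul_le_of_le_one_left (abs_nonneg _) hz.2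

theorem re_expSum_ofReal (e : ι → ℂ) (d : ι → ℝ) (t : ℝ) :
    (expSum e d t).re = ∑ i, (e i).re * Real.exp (t * d i) := by
  simp only [expSum, re_sum, ← ofReal_mul, ← ofReal_exp, re_mul_ofReal]

theorem norm_expSum_le_rpow {e : ι → ℂ} {d : ι → ℝ} {C : ℝ}
    (h0 : ∀ z : ℂ, z.re = 0 → ‖expSum e d z‖ ≤ 1) (h1 : ∀ z : ℂ, z.re = 1 → ‖expSum e d z‖ ≤ C)
    {t : ℝ} (ht : t ∈ Set.Icc (0 : ℝ) 1) : ‖expSum e d t‖ ≤ C ^ t := by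
  have h := HadamardThreeLines.norm_le_interp_of_mem_verticalClosedStrip₀₁' (expSum e d)
    (z := t) (by simpa [HadamardThreeLines.verticalClosedStrip] using ht)
    (differentiable_expSum e d).diffContOnCl
    ⟨_, Set.forall_mem_image.2 fun z hz => norm_expSum_le_of_re_mem_Icc e d hz⟩
    h0 h1
  simpa using h

theorem sum_re_mul_le_log {e : ι → ℂ} {d : ι → ℝ} {C : ℝ} (hsum : ∑ i, e i = 1)
    (h0 : ∀ z : ℂ, z.re = 0 → ‖expSum e d z‖ ≤ 1) (h1 : ∀ z : ℂ, z.re = 1 → ‖expSum e d z‖ ≤ C) :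
    ∑ i, (e i).re * d i ≤ Real.log C := by
  have hderiv : HasDerivAt (fun t : ℝ => ∑ i, (e i).re * Real.exp (t * d i))
      (∑ i, (e i).re * d i) 0 := by
    refine HasDerivAt.fun_sum fun i _ => ?_
    simpa using ((hasDerivAt_mul_const (x := (0 : ℝ)) (d i)).exp).const_mul (e i).re
  refine le_log_of_hasDerivAt_of_le_rpow hderiv ?_ ((norm_nonneg _).trans (h1 1 one_re)) ?_
  · simp [← re_sum, hsum]
  · intro t ht
    rw [← re_expSum_ofReal]
    exact (re_le_norm _).trans (norm_expSum_le_rpow h0 h1 ⟨ht.1.le, ht.2⟩)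

end ExpSum

section PartitionOfIdentity

variable {H : Type*} [NormedAddCommGroup H] [InnerProductSpace ℂ H] [CompleteSpace H]
  {ι : Type*} [Fintype ι]

def IsPartitionOfIdentity (π : ι → H →L[ℂ] H) : Prop := ∑ k, adjoint (π k) * π k = 1

namespace IsPartitionOfIdentity

variable {π : ι → H →L[ℂ] H}

theorem sum_adjoint_apply_apply (hπ : IsPartitionOfIdentity π) (a : H) :
    ∑ k, adjoint (π k) (π k a) = a := by
  simpa [_root_.sum_apply] using congr($hπ a)

theorem sum_inner_apply_apply (hπ : IsPartitionOfIdentity π) (a b : H) :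
    ∑ k, ⟪π k a, π k b⟫_ℂ = ⟪a, b⟫_ℂ := by
  simp_rw [← adjoint_inner_right, ← inner_sum, hπ.sum_adjoint_apply_apply]

theorem sum_norm_apply_sq (hπ : IsPartitionOfIdentity π) (a : H) :
    ∑ k, ‖π k a‖ ^ 2 = ‖a‖ ^ 2 := by
  have h := hπ.sum_inner_apply_apply a a
  simp only [inner_self_eq_norm_sq_to_K] at h
  exact_mod_cast h

theorem norm_apply_le (hπ : IsPartitionOfIdentity π) (k : ι) (a : H) : ‖π k a‖ ≤ ‖a‖ := by
  refine pow_le_pow_iff_left₀ (norm_nonneg _) (norm_nonneg _) two_ne_zero |>.1 ?_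
  rw [← hπ.sum_norm_apply_sq a]
  exact single_le_sum (fun i _ => sq_nonneg ‖π i a‖) (mem_univ k)

theorem norm_adjoint_apply_le (hπ : IsPartitionOfIdentity π) (k : ι) (a : H) :
    ‖adjoint (π k) a‖ ≤ ‖a‖ := by
  have hnorm : ‖adjoint (π k)‖ ≤ 1 := by
    rw [LinearIsometryEquiv.norm_map]
    exact opNorm_le_bound _ zero_le_one fun b => (one_mul ‖b‖).symm ▸ hπ.norm_apply_le k b
  simpa using le_of_opNorm_le _ hnorm a

theorem sum_norm_mul_norm_le (hπ : IsPartitionOfIdentity π) (a b : H) :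
    ∑ k, ‖π k a‖ * ‖π k b‖ ≤ ‖a‖ * ‖b‖ := by
  have h := Real.sum_mul_le_sqrt_mul_sqrt univ (fun k => ‖π k a‖) (fun k => ‖π k b‖)
  simpa [hπ.sum_norm_apply_sq] using h

theorem norm_sum_adjoint_apply_le (hπ : IsPartitionOfIdentity π) {x : ι → H} {a : H}
    (hx : ∀ k, ‖x k‖ ≤ ‖π k a‖) : ‖∑ k, adjoint (π k) (x k)‖ ≤ ‖a‖ := by
  set v := ∑ k, adjoint (π k) (x k)
  have hv : ‖v‖ ^ 2 ≤ ‖v‖ * ‖a‖ :=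
    calc ‖v‖ ^ 2 = (⟪v, v⟫_ℂ).re := by rw [inner_self_eq_norm_sq_to_K]; norm_cast
      _ = (∑ k, ⟪π k v, x k⟫_ℂ).re := by simp_rw [v, inner_sum, adjoint_inner_right]
      _ ≤ ∑ k, ‖π k v‖ * ‖x k‖ := by
        rw [re_sum]
        exact sum_le_sum fun k _ => (re_le_norm _).trans (norm_inner_le_norm _ _)
      _ ≤ ∑ k, ‖π k v‖ * ‖π k a‖ := by gcongr with k; exact hx k
      _ ≤ ‖v‖ * ‖a‖ := hπ.sum_norm_mul_norm_le v a
  nlinarith [norm_nonneg v, norm_nonneg a]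

end IsPartitionOfIdentity

end PartitionOfIdentity

section Amplitude

variable {H : Type*} [NormedAddCommGroup H] [InnerProductSpace ℂ H] [CompleteSpace H]
  {ι κ : Type*} {π : ι → H →L[ℂ] H} {τ : κ → H →L[ℂ] H} {U : H →L[ℂ] H} {ψ : H}

noncomputable def amplitude (τ : κ → H →L[ℂ] H) (U : H →L[ℂ] H) (π : ι → H →L[ℂ] H) (ψ : H)
    (jk : κ × ι) : ℂ :=
  ⟪τ jk.1 (U ψ), τ jk.1 (U (adjoint (π jk.2) (π jk.2 ψ)))⟫_ℂ

/-- Where `τ j (U ψ)` or `π k ψ` vanishes, `Real.log 0 = 0` makes the exponential wrong,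
but the amplitude vanishes too. -/
theorem norm_amplitude_mul_exp_log (V W : ℝ) (hV : 0 < V) (hW : 0 < W) (j : κ) (k : ι) :
    ‖amplitude τ U π ψ (j, k)‖
        * Real.exp (Real.log (W * ‖τ j (U ψ)‖) + Real.log (V * ‖π k ψ‖))
      = ‖amplitude τ U π ψ (j, k)‖ * (W * ‖τ j (U ψ)‖ * (V * ‖π k ψ‖)) := by
  rcases eq_or_ne (τ j (U ψ)) 0 with hp | hp
  · simp [amplitude, hp]
  rcases eq_or_ne (π k ψ) 0 with hq | hq
  · simp [amplitude, hq]
  rw [Real.exp_add, Real.exp_log (by positivity), Real.exp_log (by positivity)]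

theorem sum_amplitude_snd [Fintype ι] (hπ : IsPartitionOfIdentity π) (j : κ) :
    ∑ k, amplitude τ U π ψ (j, k) = (‖τ j (U ψ)‖ : ℂ) ^ 2 := by
  simp only [amplitude]
  rw [← inner_sum, ← map_sum, ← map_sum, hπ.sum_adjoint_apply_apply]
  exact inner_self_eq_norm_sq_to_K _

theorem sum_amplitude_fst [Fintype κ] (hτ : IsPartitionOfIdentity τ) (hU : ∀ x, ‖U x‖ = ‖x‖)
    (k : ι) : ∑ j, amplitude τ U π ψ (j, k) = (‖π k ψ‖ : ℂ) ^ 2 := by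
  have hUinner : ∀ x y, ⟪U x, U y⟫_ℂ = ⟪x, y⟫_ℂ :=
    LinearIsometry.inner_map_map ⟨U.toLinearMap, hU⟩
  simp only [amplitude]
  rw [hτ.sum_inner_apply_apply, hUinner, adjoint_inner_right]
  exact inner_self_eq_norm_sq_to_K _

variable [Fintype ι] [Fintype κ]

theorem sum_amplitude (hπ : IsPartitionOfIdentity π) (hτ : IsPartitionOfIdentity τ) :
    ∑ jk, amplitude τ U π ψ jk = (‖U ψ‖ : ℂ) ^ 2 := by
  rw [Fintype.sum_prod_type]
  simp only [sum_amplitude_snd hπ]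
  exact_mod_cast hτ.sum_norm_apply_sq (U ψ)

theorem sum_re_amplitude_mul_add (hπ : IsPartitionOfIdentity π) (hτ : IsPartitionOfIdentity τ)
    (hU : ∀ x, ‖U x‖ = ‖x‖) (a : κ → ℝ) (b : ι → ℝ) :
    ∑ jk, (amplitude τ U π ψ jk).re * (a jk.1 + b jk.2)
      = ∑ j, ‖τ j (U ψ)‖ ^ 2 * a j + ∑ k, ‖π k ψ‖ ^ 2 * b k := by
  simp only [mul_add, sum_add_distrib]
  congr 1
  · rw [Fintype.sum_prod_type]
    simp only [← sum_mul, ← re_sum, sum_amplitude_snd hπ]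
    norm_cast
  · rw [Fintype.sum_prod_type_right]
    simp only [← sum_mul, ← re_sum, sum_amplitude_fst hτ hU]
    norm_cast

theorem norm_expSum_amplitude_le_of_re_eq_zero (hπ : IsPartitionOfIdentity π)
    (hτ : IsPartitionOfIdentity τ) (hU : ∀ x, ‖U x‖ = ‖x‖) (a : κ → ℝ) (b : ι → ℝ) {z : ℂ}
    (hz : z.re = 0) :
    ‖expSum (amplitude τ U π ψ) (fun jk => a jk.1 + b jk.2) z‖ ≤ ‖ψ‖ ^ 2 := by
  have hunit : ∀ r : ℝ, ‖cexp (z * r)‖ = 1 := by simp [Complex.norm_exp, hz]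
  set w := ∑ k, adjoint (π k) (cexp (z * b k) • π k ψ)
  have hw : ‖w‖ ≤ ‖ψ‖ :=
    hπ.norm_sum_adjoint_apply_le fun k => by rw [norm_smul, hunit, one_mul]
  have hrows : expSum (amplitude τ U π ψ) (fun jk => a jk.1 + b jk.2) z
      = ∑ j, cexp (z * a j) * ⟪τ j (U ψ), τ j (U w)⟫_ℂ := by
    rw [expSum, Fintype.sum_prod_type]
    refine sum_congr rfl fun j _ => ?_
    simp only [w, amplitude, map_sum, map_smul, inner_sum, inner_smul_right, mul_sum]
    refine sum_congr rfl fun k _ => ?_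
    rw [ofReal_add, mul_add, Complex.exp_add]
    ring
  calc ‖expSum (amplitude τ U π ψ) (fun jk => a jk.1 + b jk.2) z‖
      ≤ ∑ j, ‖τ j (U ψ)‖ * ‖τ j (U w)‖ := by
        rw [hrows]
        refine (norm_sum_le _ _).trans (sum_le_sum fun j _ => ?_)
        rw [norm_mul, hunit, one_mul]
        exact norm_inner_le_norm _ _
    _ ≤ ‖U ψ‖ * ‖U w‖ := hτ.sum_norm_mul_norm_le _ _
    _ ≤ ‖ψ‖ ^ 2 := by
        rw [hU, hU, sq]
        exact mul_le_mul_of_nonneg_left hw (norm_nonneg ψ)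

theorem norm_amplitude_le (hπ : IsPartitionOfIdentity π) (hτ : IsPartitionOfIdentity τ)
    (hU : ∀ x, ‖U x‖ = ‖x‖) (O : H →L[ℂ] H) (j : κ) (k : ι) :
    ‖amplitude τ U π ψ (j, k)‖
      ≤ ‖τ j (U ψ)‖ * (‖τ j * U * adjoint (π k) * O‖ * ‖π k ψ‖ + ‖π k ψ - O (π k ψ)‖) := by
  have hsplit : τ j (U (adjoint (π k) (π k ψ)))
      = (τ j * U * adjoint (π k) * O) (π k ψ)
        + τ j (U (adjoint (π k) (π k ψ - O (π k ψ)))) := by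
    simp [map_sub]
  have hrest : ‖τ j (U (adjoint (π k) (π k ψ - O (π k ψ))))‖ ≤ ‖π k ψ - O (π k ψ)‖ :=
    (hτ.norm_apply_le j _).trans ((hU _).trans_le (hπ.norm_adjoint_apply_le k _))
  refine (norm_inner_le_norm _ _).trans (mul_le_mul_of_nonneg_left ?_ (norm_nonneg _))
  rw [hsplit]
  exact (norm_add_le _ _).trans (add_le_add (le_opNorm _ _) hrest)

theorem norm_amplitude_mul_exp_log_le (hπ : IsPartitionOfIdentity π)
    (hτ : IsPartitionOfIdentity τ) (hU : ∀ x, ‖U x‖ = ‖x‖) {V W c A B δ : ℝ} (hV : 0 < V)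
    (hW : 0 < W) (O : H →L[ℂ] H) (j : κ) (k : ι)
    (hc : V * W * ‖τ j * U * adjoint (π k) * O‖ ≤ c)
    (hA : V ≤ A) (hB : W ≤ B) (hO : ‖π k ψ - O (π k ψ)‖ ≤ δ) (hq : ‖π k ψ‖ ≤ 1) :
    ‖amplitude τ U π ψ (j, k)‖
        * Real.exp (Real.log (W * ‖τ j (U ψ)‖) + Real.log (V * ‖π k ψ‖))
      ≤ c * (‖τ j (U ψ)‖ ^ 2 * ‖π k ψ‖ ^ 2) + A * B * δ * ‖τ j (U ψ)‖ ^ 2 := by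
  set p := ‖τ j (U ψ)‖
  set q := ‖π k ψ‖
  set T := ‖τ j * U * adjoint (π k) * O‖
  set ε := ‖π k ψ - O (π k ψ)‖
  have hA0 : 0 ≤ A := hV.le.trans hA
  have hB0 : 0 ≤ B := hW.le.trans hB
  have hδ : W * V * q * ε ≤ A * B * δ :=
    calc W * V * q * ε ≤ B * A * 1 * δ := by gcongr
    _ = A * B * δ := by ring
  rw [norm_amplitude_mul_exp_log V W hV hW]
  calc ‖amplitude τ U π ψ (j, k)‖ * (W * p * (V * q))
      ≤ p * (T * q + ε) * (W * p * (V * q)) := by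
        gcongr
        exact norm_amplitude_le hπ hτ hU O j k
    _ = V * W * T * (p ^ 2 * q ^ 2) + W * V * q * ε * p ^ 2 := by ring
    _ ≤ c * (p ^ 2 * q ^ 2) + A * B * δ * p ^ 2 := by gcongr

theorem norm_expSum_amplitude_le_of_re_eq_one (hπ : IsPartitionOfIdentity π)
    (hτ : IsPartitionOfIdentity τ) (hU : ∀ x, ‖U x‖ = ‖x‖) {V : ι → ℝ} {W : κ → ℝ}
    (hV : ∀ k, 0 < V k) (hW : ∀ j, 0 < W j) (O : ι → H →L[ℂ] H) {c A B δ : ℝ}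
    (hc : ∀ j k, V k * W j * ‖τ j * U * adjoint (π k) * O k‖ ≤ c) (hA : ∀ k, V k ≤ A)
    (hB : ∀ j, W j ≤ B) (hO : ∀ k, ‖π k ψ - O k (π k ψ)‖ ≤ δ) (hψ : ‖ψ‖ = 1) {z : ℂ}
    (hz : z.re = 1) :
    ‖expSum (amplitude τ U π ψ)
        (fun jk => Real.log (W jk.1 * ‖τ jk.1 (U ψ)‖) + Real.log (V jk.2 * ‖π jk.2 ψ‖)) z‖
      ≤ c + Fintype.card ι * A * B * δ := by
  have hp : ∑ j, ‖τ j (U ψ)‖ ^ 2 = 1 := by rw [hτ.sum_norm_apply_sq, hU, hψ, one_pow]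
  have hq : ∑ k, ‖π k ψ‖ ^ 2 = 1 := by rw [hπ.sum_norm_apply_sq, hψ, one_pow]
  calc _ ≤ ∑ jk : κ × ι, ‖amplitude τ U π ψ jk‖
          * Real.exp (Real.log (W jk.1 * ‖τ jk.1 (U ψ)‖) + Real.log (V jk.2 * ‖π jk.2 ψ‖)) := by
        refine (norm_sum_le _ _).trans_eq (sum_congr rfl fun jk _ => ?_)
        rw [norm_mul, Complex.norm_exp, re_mul_ofReal, hz, one_mul]
    _ ≤ ∑ jk : κ × ι, (c * (‖τ jk.1 (U ψ)‖ ^ 2 * ‖π jk.2 ψ‖ ^ 2)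
          + A * B * δ * ‖τ jk.1 (U ψ)‖ ^ 2) :=
        sum_le_sum fun jk _ => norm_amplitude_mul_exp_log_le hπ hτ hU (hV _) (hW _) _ _ _
          (hc _ _) (hA _) (hB _) (hO _) (hψ ▸ hπ.norm_apply_le _ ψ)
    _ = c + Fintype.card ι * A * B * δ := by
        simp only [sum_add_distrib, ← mul_sum, Fintype.sum_prod_type, sum_const, card_univ,
          nsmul_eq_mul, hp, hq, mul_one]
        ring

end Amplitude

/-- `quantumPressure (fun k => ‖π k ψ‖) V` is the pressure `p_π(ψ)`. -/
noncomputable def quantumPressure {ι : Type*} [Fintype ι] (x W : ι → ℝ) : ℝ :=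
  -(∑ i, x i ^ 2 * Real.log (x i ^ 2)) - 2 * ∑ i, x i ^ 2 * Real.log (W i)

theorem quantumPressure_eq {ι : Type*} [Fintype ι] (x W : ι → ℝ) (hW : ∀ i, W i ≠ 0) :
    quantumPressure x W = -2 * ∑ i, x i ^ 2 * Real.log (W i * x i) := by
  simp only [quantumPressure, mul_sum, ← sum_neg_distrib, ← sum_sub_distrib]
  refine sum_congr rfl fun i _ => ?_
  rcases eq_or_ne (x i) 0 with h | h
  · simp [h]
  · rw [Real.log_mul (hW i) h, Real.log_pow]
    push_cast
    ring

theorem entropic_uncertainty_principle_for_quantum_pressures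
    {H : Type*} [NormedAddCommGroup H] [InnerProductSpace ℂ H] [CompleteSpace H]
    {N M : ℕ} (hN : 0 < N) (hM : 0 < M)
    (π : Fin N → H →L[ℂ] H) (τ : Fin M → H →L[ℂ] H)
    (hπ : ∑ k : Fin N, ContinuousLinearMap.adjoint (π k) * π k = 1)
    (hτ : ∑ j : Fin M, ContinuousLinearMap.adjoint (τ j) * τ j = 1)
    (V : Fin N → ℝ) (W : Fin M → ℝ) (hV : ∀ k, 0 < V k) (hW : ∀ j, 0 < W j)
    (U : H →L[ℂ] H) (hU : ∀ x : H, ‖U x‖ = ‖x‖)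
    (O : Fin N → H →L[ℂ] H) (δ' : ℝ)
    (ψ : H) (hψ : ‖ψ‖ = 1)
    (hO : ∀ k : Fin N, ‖π k ψ - O k (π k ψ)‖ ≤ δ') :
    (-(∑ j : Fin M, ‖τ j (U ψ)‖ ^ 2 * Real.log (‖τ j (U ψ)‖ ^ 2))
        - 2 * ∑ j : Fin M, ‖τ j (U ψ)‖ ^ 2 * Real.log (W j))
      + (-(∑ k : Fin N, ‖π k ψ‖ ^ 2 * Real.log (‖π k ψ‖ ^ 2))
        - 2 * ∑ k : Fin N, ‖π k ψ‖ ^ 2 * Real.log (V k))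
      ≥ -2 * Real.log
          ((Finset.univ.sup'
              (Finset.univ_nonempty_iff.mpr ⟨(⟨0, hM⟩, ⟨0, hN⟩)⟩)
              (fun jk : Fin M × Fin N =>
                V jk.2 * W jk.1 *
                  ‖τ jk.1 * U * ContinuousLinearMap.adjoint (π jk.2) * O jk.2‖))
            + (N : ℝ)
              * (Finset.univ.sup' (Finset.univ_nonempty_iff.mpr ⟨⟨0, hN⟩⟩) V)
              * (Finset.univ.sup' (Finset.univ_nonempty_iff.mpr ⟨⟨0, hM⟩⟩) W)
              * δ') := by
  let a : Fin M → ℝ := fun j => Real.log (W j * ‖τ j (U ψ)‖)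
  let b : Fin N → ℝ := fun k => Real.log (V k * ‖π k ψ‖)
  have hc : ∀ j k, V k * W j * ‖τ j * U * adjoint (π k) * O k‖
      ≤ univ.sup' (univ_nonempty_iff.mpr ⟨(⟨0, hM⟩, ⟨0, hN⟩)⟩) (fun jk : Fin M × Fin N =>
          V jk.2 * W jk.1 * ‖τ jk.1 * U * adjoint (π jk.2) * O jk.2‖) :=
    fun j k => le_sup' (fun jk : Fin M × Fin N =>
      V jk.2 * W jk.1 * ‖τ jk.1 * U * adjoint (π jk.2) * O jk.2‖) (mem_univ (j, k))
  have hA : ∀ k, V k ≤ univ.sup' (univ_nonempty_iff.mpr ⟨⟨0, hN⟩⟩) V :=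
    fun k => le_sup' V (mem_univ k)
  have hB : ∀ j, W j ≤ univ.sup' (univ_nonempty_iff.mpr ⟨⟨0, hM⟩⟩) W :=
    fun j => le_sup' W (mem_univ j)
  have hkey := sum_re_mul_le_log (e := amplitude τ U π ψ) (d := fun jk => a jk.1 + b jk.2)
    (by rw [sum_amplitude hπ hτ, hU, hψ]; simp)
    (fun z hz => (norm_expSum_amplitude_le_of_re_eq_zero hπ hτ hU a b hz).trans_eq
      (by rw [hψ, one_pow]))
    (fun z hz => norm_expSum_amplitude_le_of_re_eq_one hπ hτ hU hV hW O hc hA hB hO hψ hz)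
  rw [sum_re_amplitude_mul_add hπ hτ hU, Fintype.card_fin] at hkey
  change quantumPressure (fun j => ‖τ j (U ψ)‖) W + quantumPressure (fun k => ‖π k ψ‖) V ≥ _
  rw [quantumPressure_eq _ _ fun j => (hW j).ne', quantumPressure_eq _ _ fun k => (hV k).ne']
  linarith
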